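/- Midpoint-pool construction at the histogram level (pointwise form of the near-optimal ParamPool theorem): let p and q be histograms on n bins with centers w, let ε > 0, and suppose there exists a transport plan π between p and q such that |w(l) − w(m)| < ε whenever π(l,m) > 0. Then there exists a finite set P ⊆ ℝ (a 'ParamPool') and functions c_p, c_q : Fin n → ℝ with c_p(l) ∈ P and c_q(m) ∈ P, such that |w(l) − c_p(l)| < ε/2 for every l with p(l) > 0, and |w(m) − c_q(m)| < ε/2 for every m with q(m) > 0. (Take P to consist of the midpoints (w(l)+w(m))/2 over pairs (l,m) in the support of π; the exact-marginal property of transport plans guarantees every bin of positive mass is covered.) -/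
import Mathlib


open Finset

/-- A histogram on `n` bins: nonnegative entries summing to 1. -/
def IsHistogram {n : ℕ} (p : Fin n → ℝ) : Prop :=
  (∀ l, 0 ≤ p l) ∧ ∑ l, p l = 1

/-- A transport plan between histograms `p` and `q`. -/
def IsTransportPlan {n : ℕ} (p q : Fin n → ℝ) (π : Fin n → Fin n → ℝ) : Prop :=
  (∀ l m, 0 ≤ π l m) ∧ (∀ l, ∑ m, π l m ≤ p l) ∧ (∀ m, ∑ l, π l m ≤ q m) ∧
    (∑ l, ∑ m, π l m) = 1

/-- The transport cost of a plan `π` with respect to bin centers `w`. -/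
def cost {n : ℕ} (w : Fin n → ℝ) (π : Fin n → Fin n → ℝ) : ℝ :=
  ∑ l, ∑ m, |w l - w m| * π l m

/-- The optimal transportation distance: infimum of the cost over transport plans. -/
noncomputable def OTD {n : ℕ} (w : Fin n → ℝ) (p q : Fin n → ℝ) : ℝ :=
  sInf {c : ℝ | ∃ π, IsTransportPlan p q π ∧ cost w π = c}

/-- Midpoint-pool construction at the histogram level: if some transport plan
between `p` and `q` only couples bins whose centers are within `ε`, then there
is a finite pool `P ⊆ ℝ` and assignments `c_p, c_q` into `P` approximating the
center of every bin of positive mass to within `ε/2`. -/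
theorem midpoint_pool_histogram {n : ℕ} (hn : 1 ≤ n) (w : Fin n → ℝ)
    (p q : Fin n → ℝ) (hp : IsHistogram p) (hq : IsHistogram q)
    (ε : ℝ) (hε : 0 < ε)
    (π : Fin n → Fin n → ℝ) (hπ : IsTransportPlan p q π)
    (hsupp : ∀ l m, 0 < π l m → |w l - w m| < ε) :
    ∃ (P : Finset ℝ) (cp cq : Fin n → ℝ),
      (∀ l, cp l ∈ P) ∧ (∀ m, cq m ∈ P) ∧
      (∀ l, 0 < p l → |w l - cp l| < ε / 2) ∧
      (∀ m, 0 < q m → |w m - cq m| < ε / 2) := by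
  classical
  obtain ⟨hπ0, hπp, hπq, hπsum⟩ := hπ
  -- each row of positive p-mass has a positive entry
  have hrow : ∀ l, 0 < p l → ∃ m, 0 < π l m := by
    intro l hl
    by_contra h
    push_neg at h
    have hz : ∑ m, π l m = 0 :=
      le_antisymm (Finset.sum_nonpos fun m _ => h m) (Finset.sum_nonneg fun m _ => hπ0 l m)
    have hlt : (∑ l', ∑ m, π l' m) < ∑ l', p l' := by
      refine Finset.sum_lt_sum (fun i _ => hπp i) ⟨l, Finset.mem_univ l, ?_⟩
      rw [hz]; exact hl
    rw [hπsum, hp.2] at hlt; exact lt_irrefl 1 hlt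
  have hcol : ∀ m, 0 < q m → ∃ l, 0 < π l m := by
    intro m hm
    by_contra h
    push_neg at h
    have hz : ∑ l, π l m = 0 :=
      le_antisymm (Finset.sum_nonpos fun l _ => h l) (Finset.sum_nonneg fun l _ => hπ0 l m)
    have hlt : (∑ m', ∑ l, π l m') < ∑ m', q m' := by
      refine Finset.sum_lt_sum (fun i _ => hπq i) ⟨m, Finset.mem_univ m, ?_⟩
      rw [hz]; exact hm
    rw [Finset.sum_comm, hπsum, hq.2] at hlt; exact lt_irrefl 1 hlt
  refine ⟨(Finset.univ : Finset (Fin n × Fin n)).image (fun lm => (w lm.1 + w lm.2) / 2),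
    fun l => if h : ∃ m, 0 < π l m then (w l + w h.choose) / 2 else (w l + w l) / 2,
    fun m => if h : ∃ l, 0 < π l m then (w h.choose + w m) / 2 else (w m + w m) / 2,
    ?_, ?_, ?_, ?_⟩
  · intro l
    by_cases h : ∃ m, 0 < π l m
    · simp only [dif_pos h]
      exact Finset.mem_image.2 ⟨(l, h.choose), Finset.mem_univ _, rfl⟩
    · simp only [dif_neg h]
      exact Finset.mem_image.2 ⟨(l, l), Finset.mem_univ _, rfl⟩
  · intro m
    by_cases h : ∃ l, 0 < π l m
    · simp only [dif_pos h]
      exact Finset.mem_image.2 ⟨(h.choose, m), Finset.mem_univ _, rfl⟩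
    · simp only [dif_neg h]
      exact Finset.mem_image.2 ⟨(m, m), Finset.mem_univ _, rfl⟩
  · intro l hl
    obtain ⟨m, hm⟩ := hrow l hl
    have h : ∃ m, 0 < π l m := ⟨m, hm⟩
    simp only [dif_pos h]
    have hd := hsupp l h.choose h.choose_spec
    rw [show w l - (w l + w h.choose) / 2 = (w l - w h.choose) / 2 by ring, abs_div]
    rw [abs_of_pos (by norm_num : (0:ℝ) < 2)]
    linarith
  · intro m hm
    obtain ⟨l, hl⟩ := hcol m hm
    have h : ∃ l, 0 < π l m := ⟨l, hl⟩
    simp only [dif_pos h]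
    have hd := hsupp h.choose m h.choose_spec
    rw [show w m - (w h.choose + w m) / 2 = -((w h.choose - w m) / 2) by ring, abs_neg, abs_div]
    rw [abs_of_pos (by norm_num : (0:ℝ) < 2)]
    linarith
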